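/- Let φ₁, ..., φ_n ∈ ℝ^d with ‖φ_s‖₂ ≤ 1 for all s, let β > 0, and define H(λ) = Σ_s σ'(λᵀφ_s) φ_s φ_sᵀ + βI for λ ∈ ℝ^d. Then for any λ₁, λ₂ ∈ ℝ^d, e^{-‖λ₁-λ₂‖₂} H(λ₂) ⪯ H(λ₁) ⪯ e^{‖λ₁-λ₂‖₂} H(λ₂). -/

import Mathlib

open Matrix Real Finset

private lemma cosh_le_exp_mul (a b : ℝ) : Real.cosh a ≤ Real.exp |a - b| * Real.cosh b := by
  have h2 : ∀ x : ℝ, |Real.sinh x| ≤ Real.cosh x := by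
    intro x
    rw [Real.abs_sinh, ← Real.cosh_abs]
    nlinarith [Real.cosh_sub_sinh |x|, Real.exp_pos (-|x|)]
  have h3 : Real.cosh (a - b) + |Real.sinh (a - b)| = Real.exp |a - b| := by
    rw [Real.abs_sinh, ← Real.cosh_abs, Real.cosh_add_sinh]
  have key : Real.cosh a = Real.cosh (a - b) * Real.cosh b + Real.sinh (a - b) * Real.sinh b := by
    have h := Real.cosh_add (a - b) b
    simpa using h
  have h1 : Real.sinh (a - b) * Real.sinh b ≤ |Real.sinh (a - b)| * Real.cosh b := by
    calc Real.sinh (a - b) * Real.sinh b ≤ |Real.sinh (a - b) * Real.sinh b| := le_abs_self _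
      _ = |Real.sinh (a - b)| * |Real.sinh b| := abs_mul _ _
      _ ≤ |Real.sinh (a - b)| * Real.cosh b := mul_le_mul_of_nonneg_left (h2 b) (abs_nonneg _)
  nlinarith [Real.cosh_pos b, h3, key, h1]

private lemma sigmoid_deriv (σ : ℝ → ℝ) (hσ : ∀ w, σ w = 1 / (1 + Real.exp (-w)))
    (w : ℝ) : deriv σ w = 1 / (2 + 2 * Real.cosh w) := by
  have hfun : σ = fun w => (1 + Real.exp (-w))⁻¹ := by
    funext w; rw [hσ w, one_div]
  have hpos : (0:ℝ) < 1 + Real.exp (-w) := by positivity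
  have hd : HasDerivAt (fun w : ℝ => (1 + Real.exp (-w))⁻¹)
      (-(Real.exp (-w) * (-1)) / (1 + Real.exp (-w)) ^ 2) w := by
    have h1 : HasDerivAt (fun w : ℝ => -w) (-1) w := (hasDerivAt_id w).neg
    have h2 : HasDerivAt (fun w : ℝ => Real.exp (-w)) (Real.exp (-w) * (-1)) w :=
      (Real.hasDerivAt_exp (-w)).comp w h1
    have h3 : HasDerivAt (fun w : ℝ => 1 + Real.exp (-w)) (Real.exp (-w) * (-1)) w :=
      h2.const_add 1
    exact h3.inv (ne_of_gt hpos)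
  rw [hfun, hd.deriv]
  have hc : Real.cosh w = (Real.exp w + Real.exp (-w)) / 2 := Real.cosh_eq w
  have he : Real.exp w * Real.exp (-w) = 1 := by
    rw [← Real.exp_add]; simp
  have hew : (0:ℝ) < Real.exp w := Real.exp_pos w
  have hew' : (0:ℝ) < Real.exp (-w) := Real.exp_pos (-w)
  rw [hc]
  rw [div_eq_div_iff (by positivity) (by nlinarith)]
  nlinarith [he]

private lemma sigmoid_deriv_pos (σ : ℝ → ℝ) (hσ : ∀ w, σ w = 1 / (1 + Real.exp (-w)))
    (w : ℝ) : 0 < deriv σ w := by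
  rw [sigmoid_deriv σ hσ]
  have := Real.cosh_pos w
  positivity

private lemma sigmoid_deriv_le (σ : ℝ → ℝ) (hσ : ∀ w, σ w = 1 / (1 + Real.exp (-w)))
    {a b r : ℝ} (h : |a - b| ≤ r) : deriv σ a ≤ Real.exp r * deriv σ b := by
  rw [sigmoid_deriv σ hσ, sigmoid_deriv σ hσ]
  have hr : 0 ≤ r := le_trans (abs_nonneg _) h
  have her : (1:ℝ) ≤ Real.exp r := Real.one_le_exp hr
  have hb : Real.cosh b ≤ Real.exp |b - a| * Real.cosh a := cosh_le_exp_mul b a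
  have habs : |b - a| ≤ r := by rwa [abs_sub_comm]
  have hbr : Real.cosh b ≤ Real.exp r * Real.cosh a := by
    have hee := Real.exp_le_exp.mpr habs
    nlinarith [Real.cosh_pos a, Real.exp_pos |b - a|]
  have hca := Real.cosh_pos a
  have hcb := Real.cosh_pos b
  have hrw : Real.exp r * (1 / (2 + 2 * Real.cosh b)) = Real.exp r / (2 + 2 * Real.cosh b) := by
    ring
  rw [hrw, div_le_div_iff₀ (by positivity) (by positivity)]
  nlinarith

private lemma quad_form_eq {d n : ℕ} (φ : Fin n → Fin d → ℝ) (β : ℝ)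
    (σ : ℝ → ℝ) (H : (Fin d → ℝ) → Matrix (Fin d) (Fin d) ℝ)
    (hH : ∀ l, H l = ∑ s, deriv σ (l ⬝ᵥ φ s) • vecMulVec (φ s) (φ s) + β • 1)
    (l : Fin d → ℝ) (x : Fin d → ℝ) :
    x ⬝ᵥ (H l *ᵥ x) = ∑ s, deriv σ (l ⬝ᵥ φ s) * (φ s ⬝ᵥ x) ^ 2 + β * (x ⬝ᵥ x) := by
  have hsum : ((∑ s, deriv σ (l ⬝ᵥ φ s) • vecMulVec (φ s) (φ s)) *ᵥ x)
      = ∑ s, (deriv σ (l ⬝ᵥ φ s) • vecMulVec (φ s) (φ s)) *ᵥ x := by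
    funext i
    simp only [mulVec, dotProduct, Matrix.sum_apply, Finset.sum_apply, Finset.sum_mul]
    exact Finset.sum_comm
  rw [hH, Matrix.add_mulVec, dotProduct_add, hsum]
  congr 1
  · have hdsum : x ⬝ᵥ (∑ s, (deriv σ (l ⬝ᵥ φ s) • vecMulVec (φ s) (φ s)) *ᵥ x)
        = ∑ s, x ⬝ᵥ ((deriv σ (l ⬝ᵥ φ s) • vecMulVec (φ s) (φ s)) *ᵥ x) := by
      simp only [dotProduct, Finset.sum_apply, Finset.mul_sum]
      exact Finset.sum_comm
    rw [hdsum]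
    apply Finset.sum_congr rfl
    intro s _
    rw [Matrix.smul_mulVec, dotProduct_smul, smul_eq_mul]
    have hv : vecMulVec (φ s) (φ s) *ᵥ x = (φ s ⬝ᵥ x) • φ s := by
      funext i
      simp only [mulVec, dotProduct, vecMulVec_apply, Pi.smul_apply, smul_eq_mul]
      rw [Finset.sum_mul]
      exact Finset.sum_congr rfl fun j _ => by ring
    rw [hv, dotProduct_smul, smul_eq_mul, dotProduct_comm x (φ s)]
    ring
  · rw [Matrix.smul_mulVec, Matrix.one_mulVec, dotProduct_smul, smul_eq_mul]

private lemma herm {d n : ℕ} (φ : Fin n → Fin d → ℝ) (β : ℝ)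
    (σ : ℝ → ℝ) (H : (Fin d → ℝ) → Matrix (Fin d) (Fin d) ℝ)
    (hH : ∀ l, H l = ∑ s, deriv σ (l ⬝ᵥ φ s) • vecMulVec (φ s) (φ s) + β • 1)
    (l : Fin d → ℝ) : (H l).IsHermitian := by
  rw [hH]
  unfold Matrix.IsHermitian
  ext i j
  simp only [Matrix.conjTranspose_apply, Matrix.add_apply, Matrix.sum_apply,
    Matrix.smul_apply, vecMulVec_apply, Matrix.one_apply, smul_eq_mul, star_trivial]
  congr 1
  · apply Finset.sum_congr rfl
    intro s _
    ring
  · by_cases h : i = j <;> simp [h, eq_comm]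

/-- The Hessian `H(λ) = Σ_s σ'(λᵀφ_s) φ_s φ_sᵀ + βI` of the logistic loss, with
features of norm at most 1, satisfies
`e^{-‖λ₁-λ₂‖} H(λ₂) ⪯ H(λ₁) ⪯ e^{‖λ₁-λ₂‖} H(λ₂)`. -/
theorem hessian_loewner_sandwich {d n : ℕ} (φ : Fin n → Fin d → ℝ)
    (hφ : ∀ s, Real.sqrt (φ s ⬝ᵥ φ s) ≤ 1) (β : ℝ) (hβ : 0 < β)
    (σ : ℝ → ℝ) (hσ : ∀ w, σ w = 1 / (1 + Real.exp (-w)))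
    (H : (Fin d → ℝ) → Matrix (Fin d) (Fin d) ℝ)
    (hH : ∀ l, H l = ∑ s, deriv σ (l ⬝ᵥ φ s) • vecMulVec (φ s) (φ s) + β • 1)
    (l₁ l₂ : Fin d → ℝ) :
    (H l₁ - Real.exp (-Real.sqrt ((l₁ - l₂) ⬝ᵥ (l₁ - l₂))) • H l₂).PosSemidef ∧
    (Real.exp (Real.sqrt ((l₁ - l₂) ⬝ᵥ (l₁ - l₂))) • H l₂ - H l₁).PosSemidef := by
  set r := Real.sqrt ((l₁ - l₂) ⬝ᵥ (l₁ - l₂)) with hr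
  have hrnn : 0 ≤ r := Real.sqrt_nonneg _
  -- Cauchy-Schwarz bound
  have hbound : ∀ s, |l₁ ⬝ᵥ φ s - l₂ ⬝ᵥ φ s| ≤ r := by
    intro s
    have hsub : l₁ ⬝ᵥ φ s - l₂ ⬝ᵥ φ s = (l₁ - l₂) ⬝ᵥ φ s := (sub_dotProduct l₁ l₂ (φ s)).symm
    rw [hsub]
    set u := l₁ - l₂
    have hcs : ((u ⬝ᵥ φ s)) ^ 2 ≤ (u ⬝ᵥ u) * (φ s ⬝ᵥ φ s) := by
      have := Finset.sum_mul_sq_le_sq_mul_sq Finset.univ u (φ s)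
      simp only [dotProduct]
      calc (∑ i, u i * φ s i) ^ 2 ≤ (∑ i, u i ^ 2) * ∑ i, φ s i ^ 2 := this
        _ = (∑ i, u i * u i) * ∑ i, φ s i * φ s i := by simp [sq]
    have huu : 0 ≤ u ⬝ᵥ u := Finset.sum_nonneg fun i _ => mul_self_nonneg _
    have hpp : 0 ≤ φ s ⬝ᵥ φ s := Finset.sum_nonneg fun i _ => mul_self_nonneg _
    have h1 : |u ⬝ᵥ φ s| ≤ Real.sqrt (u ⬝ᵥ u) * Real.sqrt (φ s ⬝ᵥ φ s) := by
      rw [← Real.sqrt_mul_self (abs_nonneg (u ⬝ᵥ φ s)), ← Real.sqrt_mul huu]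
      apply Real.sqrt_le_sqrt
      rw [← sq_abs] at hcs
      nlinarith [sq_abs (u ⬝ᵥ φ s)]
    calc |u ⬝ᵥ φ s| ≤ Real.sqrt (u ⬝ᵥ u) * Real.sqrt (φ s ⬝ᵥ φ s) := h1
      _ ≤ Real.sqrt (u ⬝ᵥ u) * 1 := by
          exact mul_le_mul_of_nonneg_left (hφ s) (Real.sqrt_nonneg _)
      _ = r := by rw [mul_one]
  have hxx : ∀ x : Fin d → ℝ, 0 ≤ x ⬝ᵥ x :=
    fun x => Finset.sum_nonneg fun i _ => mul_self_nonneg _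
  have hQ := quad_form_eq φ β σ H hH
  have hherm := herm φ β σ H hH
  have hgpos := sigmoid_deriv_pos σ hσ
  have hsmul : ∀ (c : ℝ) (M : Matrix (Fin d) (Fin d) ℝ), M.IsHermitian → (c • M).IsHermitian := by
    intro c M hM
    unfold Matrix.IsHermitian
    ext i j
    simp only [Matrix.conjTranspose_apply, Matrix.smul_apply, smul_eq_mul, star_trivial]
    rw [← hM.apply i j, star_trivial]
  constructor
  · refine posSemidef_iff_dotProduct_mulVec.mpr ⟨(hherm l₁).sub (hsmul _ _ (hherm l₂)), ?_⟩
    intro x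
    simp only [star_trivial, Matrix.sub_mulVec, dotProduct_sub, Matrix.smul_mulVec,
      dotProduct_smul, smul_eq_mul, hQ]
    rw [sub_nonneg]
    have hterm : ∀ s ∈ Finset.univ (α := Fin n),
        Real.exp (-r) * (deriv σ (l₂ ⬝ᵥ φ s) * (φ s ⬝ᵥ x) ^ 2)
        ≤ deriv σ (l₁ ⬝ᵥ φ s) * (φ s ⬝ᵥ x) ^ 2 := by
      intro s _
      have h1 : deriv σ (l₂ ⬝ᵥ φ s) ≤ Real.exp r * deriv σ (l₁ ⬝ᵥ φ s) := by
        apply sigmoid_deriv_le σ hσ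
        rw [abs_sub_comm]; exact hbound s
      have he : Real.exp (-r) * Real.exp r = 1 := by
        rw [← Real.exp_add]; simp
      have hepos := Real.exp_pos (-r)
      have h2 : Real.exp (-r) * deriv σ (l₂ ⬝ᵥ φ s) ≤ deriv σ (l₁ ⬝ᵥ φ s) := by
        have h4 := mul_le_mul_of_nonneg_left h1 hepos.le
        have h5 : Real.exp (-r) * (Real.exp r * deriv σ (l₁ ⬝ᵥ φ s))
            = deriv σ (l₁ ⬝ᵥ φ s) := by rw [← mul_assoc, he, one_mul]
        linarith
      calc Real.exp (-r) * (deriv σ (l₂ ⬝ᵥ φ s) * (φ s ⬝ᵥ x) ^ 2)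
          = (Real.exp (-r) * deriv σ (l₂ ⬝ᵥ φ s)) * (φ s ⬝ᵥ x) ^ 2 := by ring
        _ ≤ deriv σ (l₁ ⬝ᵥ φ s) * (φ s ⬝ᵥ x) ^ 2 :=
            mul_le_mul_of_nonneg_right h2 (sq_nonneg _)
    have hsum' : Real.exp (-r) * (∑ s, deriv σ (l₂ ⬝ᵥ φ s) * (φ s ⬝ᵥ x) ^ 2)
        ≤ ∑ s, deriv σ (l₁ ⬝ᵥ φ s) * (φ s ⬝ᵥ x) ^ 2 := by
      rw [Finset.mul_sum]; exact Finset.sum_le_sum hterm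
    have hexp1 : Real.exp (-r) ≤ 1 := Real.exp_le_one_iff.mpr (by linarith)
    have h0 : 0 ≤ β * (x ⬝ᵥ x) := mul_nonneg hβ.le (hxx x)
    have hβx : Real.exp (-r) * (β * (x ⬝ᵥ x)) ≤ β * (x ⬝ᵥ x) := by nlinarith [h0, hexp1]
    have hexpand : Real.exp (-r) * ((∑ s, deriv σ (l₂ ⬝ᵥ φ s) * (φ s ⬝ᵥ x) ^ 2) + β * (x ⬝ᵥ x))
        = Real.exp (-r) * (∑ s, deriv σ (l₂ ⬝ᵥ φ s) * (φ s ⬝ᵥ x) ^ 2)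
          + Real.exp (-r) * (β * (x ⬝ᵥ x)) := by ring
    linarith
  · refine posSemidef_iff_dotProduct_mulVec.mpr ⟨(hsmul _ _ (hherm l₂)).sub (hherm l₁), ?_⟩
    intro x
    simp only [star_trivial, Matrix.sub_mulVec, dotProduct_sub, Matrix.smul_mulVec,
      dotProduct_smul, smul_eq_mul, hQ]
    rw [sub_nonneg]
    have hterm : ∀ s ∈ Finset.univ (α := Fin n),
        deriv σ (l₁ ⬝ᵥ φ s) * (φ s ⬝ᵥ x) ^ 2
        ≤ Real.exp r * (deriv σ (l₂ ⬝ᵥ φ s) * (φ s ⬝ᵥ x) ^ 2) := by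
      intro s _
      have h1 : deriv σ (l₁ ⬝ᵥ φ s) ≤ Real.exp r * deriv σ (l₂ ⬝ᵥ φ s) :=
        sigmoid_deriv_le σ hσ (hbound s)
      calc deriv σ (l₁ ⬝ᵥ φ s) * (φ s ⬝ᵥ x) ^ 2
          ≤ (Real.exp r * deriv σ (l₂ ⬝ᵥ φ s)) * (φ s ⬝ᵥ x) ^ 2 :=
            mul_le_mul_of_nonneg_right h1 (sq_nonneg _)
        _ = Real.exp r * (deriv σ (l₂ ⬝ᵥ φ s) * (φ s ⬝ᵥ x) ^ 2) := by ring
    have hsum' : (∑ s, deriv σ (l₁ ⬝ᵥ φ s) * (φ s ⬝ᵥ x) ^ 2)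
        ≤ Real.exp r * (∑ s, deriv σ (l₂ ⬝ᵥ φ s) * (φ s ⬝ᵥ x) ^ 2) := by
      rw [Finset.mul_sum]; exact Finset.sum_le_sum hterm
    have hexp1 : (1:ℝ) ≤ Real.exp r := Real.one_le_exp hrnn
    have h0 : 0 ≤ β * (x ⬝ᵥ x) := mul_nonneg hβ.le (hxx x)
    have hβx : β * (x ⬝ᵥ x) ≤ Real.exp r * (β * (x ⬝ᵥ x)) := by nlinarith [h0, hexp1]
    have hexpand : Real.exp r * ((∑ s, deriv σ (l₂ ⬝ᵥ φ s) * (φ s ⬝ᵥ x) ^ 2) + β * (x ⬝ᵥ x))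
        = Real.exp r * (∑ s, deriv σ (l₂ ⬝ᵥ φ s) * (φ s ⬝ᵥ x) ^ 2)
          + Real.exp r * (β * (x ⬝ᵥ x)) := by ring
    linarith
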